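/- arXiv:1206.6319 — 5 statements merged into one kernel-verified Lean document; each statement's English description precedes it below -/
import Mathlib

section
/- If A is a Conley attractor of an IFS F on a compact metric space, then F(A) = A, where F(B) = ∪_{f∈F} f(B). -/
open Set Filter Metric Topology

/-- The set map of an IFS: `F(S) = ⋃ i, fᵢ(S)`. -/
def IFSApply {ι X : Type*} (f : ι → X → X) (S : Set X) : Set X := ⋃ i, f i '' S

/-- `lim_{k→∞} F^k(closure U) = A` in the Hausdorff (extended) metric. -/
def ConleyLim {ι X : Type*} [MetricSpace X] (f : ι → X → X) (U A : Set X) : Prop :=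
  Filter.Tendsto (fun k => EMetric.hausdorffEdist ((IFSApply f)^[k] (closure U)) A)
    Filter.atTop (nhds 0)

/-- A compact set `A` is a Conley attractor of the IFS `f` if there is an open `U ⊇ A`
with `A = lim_{k→∞} F^k(closure U)`. -/
def IsConleyAttractor {ι X : Type*} [MetricSpace X] (f : ι → X → X) (A : Set X) : Prop :=
  IsCompact A ∧ ∃ U : Set X, IsOpen U ∧ A ⊆ U ∧ ConleyLim f U A

/-- The basin of a Conley attractor: the union of all open sets `U` as in the definition. -/
def conleyBasin {ι X : Type*} [MetricSpace X] (f : ι → X → X) (A : Set X) : Set X :=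
  ⋃₀ {U : Set X | IsOpen U ∧ A ⊆ U ∧ ConleyLim f U A}

/-- `lim_{k→∞} F^k(S) = A` in the Hausdorff (extended) metric. -/
def IFSLim {ι X : Type*} [MetricSpace X] (f : ι → X → X) (S A : Set X) : Prop :=
  Filter.Tendsto (fun k => EMetric.hausdorffEdist ((IFSApply f)^[k] S) A)
    Filter.atTop (nhds 0)

/-- `A` is a strict attractor of the IFS `f`. -/
def IsStrictAttractor {ι X : Type*} [MetricSpace X] (f : ι → X → X) (A : Set X) : Prop :=
  A.Nonempty ∧ IsCompact A ∧ IFSApply f A = A ∧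
  ∃ U : Set X, IsOpen U ∧ A ⊆ U ∧
    ∀ S : Set X, S.Nonempty → IsCompact S → S ⊆ U → IFSLim f S A

/-- The basin of a strict attractor: the largest open `U` with
`lim_{k→∞} F^k(S) = A` for all nonempty compact `S ⊆ U`. -/
def strictBasin {ι X : Type*} [MetricSpace X] (f : ι → X → X) (A : Set X) : Set X :=
  ⋃₀ {U : Set X | IsOpen U ∧
    ∀ S : Set X, S.Nonempty → IsCompact S → S ⊆ U → IFSLim f S A}

/-!
Finitely many continuous maps are uniformly continuous near a compact set, so the set map
`F` is continuous for the Hausdorff distance at `A`. Hence with `Kₖ = Fᵏ(closure U) → A`,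
`F(A) = lim F(Kₖ) = lim Kₖ₊₁ = A`; compactness of `A` and `F(A)` makes Hausdorff distance
zero mean equality.
-/

open scoped ENNReal

theorem IsCompact.exists_forall_edist_lt {α β : Type*} [PseudoEMetricSpace α]
    [PseudoEMetricSpace β] {s : Set α} (hs : IsCompact s) {g : α → β} (hg : Continuous g)
    {ε : ℝ≥0∞} (hε : 0 < ε) :
    ∃ δ > 0, ∀ x ∈ s, ∀ y, edist x y < δ → edist (g x) (g y) < ε := by
  obtain ⟨δ, hδ, h⟩ := mem_uniformity_edist.1 <|
    hs.uniformContinuousAt_of_continuousAt g (fun _ _ => hg.continuousAt)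
      (edist_mem_uniformity hε)
  exact ⟨δ, hδ, fun x hx y hxy => h hxy hx⟩

section IFS

variable {ι X : Type*} [MetricSpace X] (f : ι → X → X)

theorem isCompact_IFSApply [Finite ι] (hf : ∀ i, Continuous (f i)) {A : Set X}
    (hA : IsCompact A) : IsCompact (IFSApply f A) :=
  isCompact_iUnion fun i => hA.image (hf i)

theorem hausdorffEDist_IFSApply_le {δ ε : ℝ≥0∞} {A K : Set X}
    (h : ∀ x ∈ A, ∀ y, edist x y < δ → ∀ i, edist (f i x) (f i y) < ε)
    (hAK : hausdorffEDist A K < δ) :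
    hausdorffEDist (IFSApply f A) (IFSApply f K) ≤ ε := by
  refine hausdorffEDist_le_of_mem_edist ?_ ?_
  · rintro _ ⟨_, ⟨i, rfl⟩, x, hx, rfl⟩
    obtain ⟨y, hy, hxy⟩ := exists_edist_lt_of_hausdorffEDist_lt hx hAK
    exact ⟨f i y, mem_iUnion.2 ⟨i, mem_image_of_mem _ hy⟩, (h x hx y hxy i).le⟩
  · rintro _ ⟨_, ⟨i, rfl⟩, y, hy, rfl⟩
    obtain ⟨x, hx, hyx⟩ :=
      exists_edist_lt_of_hausdorffEDist_lt hy (hausdorffEDist_comm (s := A) ▸ hAK)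
    refine ⟨f i x, mem_iUnion.2 ⟨i, mem_image_of_mem _ hx⟩, ?_⟩
    rw [edist_comm] at hyx ⊢
    exact (h x hx y hyx i).le

theorem tendsto_hausdorffEDist_IFSApply [Fintype ι] (hf : ∀ i, Continuous (f i)) {A : Set X}
    (hA : IsCompact A) {α : Type*} {l : Filter α} {K : α → Set X}
    (hK : Tendsto (fun k => hausdorffEDist A (K k)) l (𝓝 0)) :
    Tendsto (fun k => hausdorffEDist (IFSApply f A) (IFSApply f (K k))) l (𝓝 0) := by
  refine ENNReal.tendsto_nhds_zero.2 fun ε hε => ?_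
  -- one `δ` for all `i`: the map `x ↦ (f i x)ᵢ` into the sup-metric product is continuous
  obtain ⟨δ, hδ, h⟩ := hA.exists_forall_edist_lt (continuous_pi hf) hε
  have hfδ : ∀ x ∈ A, ∀ y, edist x y < δ → ∀ i, edist (f i x) (f i y) < ε :=
    fun x hx y hxy i =>
      (edist_le_pi_edist (fun i => f i x) (fun i => f i y) i).trans_lt (h x hx y hxy)
  filter_upwards [hK.eventually (gt_mem_nhds hδ)] with k hk
  exact hausdorffEDist_IFSApply_le f hfδ hk

end IFS

theorem conley_attractor_invariant_general {ι X : Type*} [MetricSpace X]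
    [Fintype ι] (f : ι → X → X) (hf : ∀ i, Continuous (f i))
    (A : Set X) (hA : IsConleyAttractor f A) :
    IFSApply f A = A := by
  obtain ⟨hAc, U, -, -, hlim⟩ := hA
  set K : ℕ → Set X := fun k => (IFSApply f)^[k] (closure U)
  have hK : Tendsto (fun k => hausdorffEDist (K k) A) atTop (𝓝 0) := hlim
  have hFK : Tendsto (fun k => hausdorffEDist (IFSApply f A) (IFSApply f (K k))) atTop (𝓝 0) :=
    tendsto_hausdorffEDist_IFSApply f hf hAc (by simpa only [hausdorffEDist_comm] using hK)
  have hK_succ : Tendsto (fun k => hausdorffEDist (K (k + 1)) A) atTop (𝓝 0) :=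
    hK.comp (tendsto_add_atTop_nat 1)
  have hdist : hausdorffEDist (IFSApply f A) A = 0 := by
    refine nonpos_iff_eq_zero.1 (ge_of_tendsto' (by simpa using hFK.add hK_succ) fun k => ?_)
    have hK_succ_eq : K (k + 1) = IFSApply f (K k) := Function.iterate_succ_apply' _ _ _
    exact hK_succ_eq ▸ hausdorffEDist_triangle
  exact ((isCompact_IFSApply f hf hAc).isClosed.hausdorffEDist_zero_iff hAc.isClosed).1 hdist

theorem conley_attractor_invariant {ι X : Type*} [MetricSpace X] [CompactSpace X]
    [Fintype ι] [Nonempty ι] (f : ι → X → X) (hf : ∀ i, Continuous (f i))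
    (A : Set X) (hA : IsConleyAttractor f A) :
    IFSApply f A = A :=
  conley_attractor_invariant_general f hf A hA
end

section
/- If A and A' are Conley attractors of an IFS F on a compact metric space, then A ∪ A' is a Conley attractor of F. -/
open Set Filter Metric Topology

/-! Iterating the IFS commutes with unions, so the Hausdorff distance from
`Fᵏ(closure (U ∪ U')) = Fᵏ(closure U) ∪ Fᵏ(closure U')` to `A ∪ A'` is at most the larger of the
distances from `Fᵏ(closure U)` to `A` and from `Fᵏ(closure U')` to `A'`, both of which tend to `0`. -/

lemma IFSApply_union {ι X : Type*} (f : ι → X → X) (S T : Set X) :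
    IFSApply f (S ∪ T) = IFSApply f S ∪ IFSApply f T := by
  simp only [IFSApply, image_union, iUnion_union_distrib]

lemma IFSApply_iterate_union {ι X : Type*} (f : ι → X → X) (S T : Set X) (k : ℕ) :
    (IFSApply f)^[k] (S ∪ T) = (IFSApply f)^[k] S ∪ (IFSApply f)^[k] T := by
  induction k with
  | zero => rfl
  | succ k ih => simp only [Function.iterate_succ_apply', ih, IFSApply_union]

lemma ConleyLim.union {ι X : Type*} [MetricSpace X] {f : ι → X → X} {U U' A A' : Set X}
    (h : ConleyLim f U A) (h' : ConleyLim f U' A') : ConleyLim f (U ∪ U') (A ∪ A') := by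
  have hbound : ∀ k : ℕ,
      hausdorffEDist ((IFSApply f)^[k] (closure (U ∪ U'))) (A ∪ A') ≤
        max (hausdorffEDist ((IFSApply f)^[k] (closure U)) A)
          (hausdorffEDist ((IFSApply f)^[k] (closure U')) A') := fun k => by
    rw [closure_union, IFSApply_iterate_union]
    exact hausdorffEDist_union_le
  have hmax := h.max h'
  rw [max_self] at hmax
  exact tendsto_of_tendsto_of_tendsto_of_le_of_le tendsto_const_nhds hmax (fun _ => zero_le)
    hbound

lemma IsConleyAttractor.union {ι X : Type*} [MetricSpace X] {f : ι → X → X} {A A' : Set X}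
    (hA : IsConleyAttractor f A) (hA' : IsConleyAttractor f A') :
    IsConleyAttractor f (A ∪ A') :=
  let ⟨hcA, U, hU, hAU, hlim⟩ := hA
  let ⟨hcA', U', hU', hAU', hlim'⟩ := hA'
  ⟨hcA.union hcA', U ∪ U', hU.union hU', union_subset_union hAU hAU', hlim.union hlim'⟩

theorem conley_attractor_union_general {ι X : Type*} [MetricSpace X]
    (f : ι → X → X)
    (A A' : Set X) (hA : IsConleyAttractor f A) (hA' : IsConleyAttractor f A') :
    IsConleyAttractor f (A ∪ A') :=
  hA.union hA'

theorem conley_attractor_union {ι X : Type*} [MetricSpace X] [CompactSpace X]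
    [Fintype ι] [Nonempty ι] (f : ι → X → X) (hf : ∀ i, Continuous (f i))
    (A A' : Set X) (hA : IsConleyAttractor f A) (hA' : IsConleyAttractor f A') :
    IsConleyAttractor f (A ∪ A') :=
  conley_attractor_union_general f A A' hA hA'
end

section
/- If A is a strict attractor of an IFS F on a compact metric space with basin B, then A is a Conley attractor of F. -/
open Set Filter Metric Topology

theorem strict_attractor_is_conley_general {ι X : Type*} [MetricSpace X] [CompactSpace X]
    (f : ι → X → X)
    (A : Set X) (hA : IsStrictAttractor f A) :
    IsConleyAttractor f A := by
  obtain ⟨hA_ne, hA_compact, -, U, hU_open, hAU, hU_lim⟩ := hA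
  obtain ⟨V, hV_open, hAV, hVU⟩ :=
    normal_exists_closure_subset hA_compact.isClosed hU_open hAU
  have hV_closure_ne : (closure V).Nonempty := hA_ne.mono (hAV.trans subset_closure)
  exact ⟨hA_compact, V, hV_open, hAV,
    hU_lim (closure V) hV_closure_ne isClosed_closure.isCompact hVU⟩

theorem strict_attractor_is_conley {ι X : Type*} [MetricSpace X] [CompactSpace X]
    [Fintype ι] [Nonempty ι] (f : ι → X → X) (hf : ∀ i, Continuous (f i))
    (A : Set X) (hA : IsStrictAttractor f A) :
    IsConleyAttractor f A :=
  strict_attractor_is_conley_general f A hA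
end

section
/- A compact set A is a Conley attractor of an IFS F on a compact metric space if and only if A = ω(U) for some open set U with A ⊆ U, where ω(S) = ∩_{K≥1} closure(∪_{k≥K} F^k(S)). -/
open Set Filter Metric Topology

/-! The set map `F` of a finite IFS of continuous maps commutes with decreasing intersections of
closed sets in a compact space (pigeonhole over the finitely many maps, then Cantor's
intersection theorem for the fibres of each map). Writing `Tₖ` for the closures of the tails
`⋃_{j ≥ k} Fʲ(U)`, we get `Tₖ₊₁ ⊆ F(Tₖ)` and hence `ω(U) ⊆ F(ω(U))`; if moreover `ω(U) ⊆ U`, then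
`ω(U) ⊆ Fᵏ(closure U) ⊆ Tₖ`, and `Tₖ` eventually lies in every neighbourhood of `ω(U)`, so
`Fᵏ(closure U) → ω(U)`. Conversely, the Hausdorff limit of any sequence of sets coincides with the
intersection of the closures of its tails, and by continuity `Fᵏ(closure U)` and `Fᵏ(U)` have
the same tails up to closure. -/

theorem iInter_image_subset_image_iInter_of_directed {κ X Y : Type*} [Nonempty κ]
    [TopologicalSpace X] [CompactSpace X] [TopologicalSpace Y] [T1Space Y] {g : X → Y}
    (hg : Continuous g) {S : κ → Set X} (hS : Directed (· ⊇ ·) S) (hSc : ∀ K, IsClosed (S K)) :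
    ⋂ K, g '' S K ⊆ g '' ⋂ K, S K := by
  intro y hy
  have hfiber : (⋂ K, S K ∩ g ⁻¹' {y}).Nonempty := by
    refine IsCompact.nonempty_iInter_of_directed_nonempty_isCompact_isClosed _
      (fun a b => let ⟨c, ha, hb⟩ := hS a b
        ⟨c, inter_subset_inter_left _ ha, inter_subset_inter_left _ hb⟩) (fun K => ?_)
      (fun K => ((hSc K).inter (isClosed_singleton.preimage hg)).isCompact)
      (fun K => (hSc K).inter (isClosed_singleton.preimage hg))
    obtain ⟨x, hx, rfl⟩ := mem_iInter.1 hy K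
    exact ⟨x, hx, rfl⟩
  obtain ⟨x, hx⟩ := hfiber
  rw [← iInter_inter] at hx
  exact ⟨x, hx.1, hx.2⟩

section IFSApply

variable {ι X : Type*} (f : ι → X → X)

theorem ifsApply_mono : Monotone (IFSApply f) :=
  fun _ _ h => iUnion_mono fun _ => image_mono h

theorem ifsApply_iterate_mono (k : ℕ) : Monotone (IFSApply f)^[k] :=
  (ifsApply_mono f).iterate k

variable [TopologicalSpace X] {f}

theorem ifsApply_closure_subset (hf : ∀ i, Continuous (f i)) (S : Set X) :
    IFSApply f (closure S) ⊆ closure (IFSApply f S) :=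
  iUnion_subset fun i => (image_closure_subset_closure_image (hf i)).trans
    (closure_mono (subset_iUnion (fun j => f j '' S) i))

theorem ifsApply_iterate_closure_subset (hf : ∀ i, Continuous (f i)) (k : ℕ) (S : Set X) :
    (IFSApply f)^[k] (closure S) ⊆ closure ((IFSApply f)^[k] S) := by
  induction k with
  | zero => exact subset_rfl
  | succ k ih =>
    rw [Function.iterate_succ_apply', Function.iterate_succ_apply']
    exact (ifsApply_mono f ih).trans (ifsApply_closure_subset hf _)

theorem IsCompact.ifsApply [Finite ι] (hf : ∀ i, Continuous (f i)) {S : Set X}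
    (hS : IsCompact S) : IsCompact (IFSApply f S) :=
  isCompact_iUnion fun i => hS.image (hf i)

theorem iInter_ifsApply_subset_ifsApply_iInter [Finite ι] [CompactSpace X] [T1Space X]
    (hf : ∀ i, Continuous (f i)) {S : ℕ → Set X} (hS : Antitone S)
    (hSc : ∀ K, IsClosed (S K)) :
    ⋂ K, IFSApply f (S K) ⊆ IFSApply f (⋂ K, S K) := by
  unfold IFSApply
  rw [iInter_iUnion_of_antitone (s := fun i K => f i '' S K)
    fun i _ _ h => image_mono (hS h)]
  exact iUnion_mono fun i =>
    iInter_image_subset_image_iInter_of_directed (hf i) hS.directed_ge hSc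

end IFSApply

section OmegaLimit

variable {ι X : Type*} [TopologicalSpace X] {f : ι → X → X}

variable (f) in
def ifsTail (U : Set X) (K : ℕ) : Set X :=
  closure (⋃ k ≥ K, (IFSApply f)^[k] U)

variable (f) in
def ifsOmegaLimit (U : Set X) : Set X :=
  ⋂ K, ifsTail f U K

theorem isClosed_ifsTail (U : Set X) (K : ℕ) : IsClosed (ifsTail f U K) :=
  isClosed_closure

theorem ifsTail_antitone (U : Set X) : Antitone (ifsTail f U) :=
  fun _ _ h => closure_mono (biUnion_subset_biUnion_left fun _ hk => le_trans h hk)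

theorem iterate_subset_ifsTail (U : Set X) {K k : ℕ} (hk : K ≤ k) :
    (IFSApply f)^[k] U ⊆ ifsTail f U K :=
  (subset_biUnion_of_mem (u := fun k => (IFSApply f)^[k] U) hk).trans subset_closure

theorem ifsTail_closure (hf : ∀ i, Continuous (f i)) (U : Set X) (K : ℕ) :
    ifsTail f (closure U) K = ifsTail f U K := by
  refine subset_antisymm (closure_minimal (iUnion₂_subset fun k hk => ?_) isClosed_closure)
    (closure_mono (biUnion_mono subset_rfl fun k _ => ifsApply_iterate_mono f k subset_closure))
  exact (ifsApply_iterate_closure_subset hf k U).trans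
    (closure_mono (subset_biUnion_of_mem (u := fun k => (IFSApply f)^[k] U) hk))

theorem ifsTail_succ_subset [Finite ι] [CompactSpace X] [T2Space X]
    (hf : ∀ i, Continuous (f i)) (U : Set X) (K : ℕ) :
    ifsTail f U (K + 1) ⊆ IFSApply f (ifsTail f U K) := by
  refine closure_minimal (iUnion₂_subset fun k hk => ?_)
    ((isClosed_ifsTail U K).isCompact.ifsApply hf).isClosed
  obtain ⟨k, rfl⟩ := Nat.exists_eq_add_of_le' (Nat.one_le_of_lt hk)
  rw [Function.iterate_succ_apply']
  exact ifsApply_mono f (iterate_subset_ifsTail U (Nat.le_of_succ_le_succ hk))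

theorem isClosed_ifsOmegaLimit (U : Set X) : IsClosed (ifsOmegaLimit f U) :=
  isClosed_iInter (isClosed_ifsTail U)

theorem iInter_one_le_eq_ifsOmegaLimit (U : Set X) :
    ⋂ K ∈ {K : ℕ | 1 ≤ K}, closure (⋃ k ∈ {k : ℕ | K ≤ k}, (IFSApply f)^[k] U) =
      ifsOmegaLimit f U :=
  (iInter_ge_eq_iInter_nat_add (ifsTail f U) 1).trans ((ifsTail_antitone U).iInter_nat_add 1)

theorem ifsOmegaLimit_subset_ifsApply [Finite ι] [CompactSpace X] [T2Space X]
    (hf : ∀ i, Continuous (f i)) (U : Set X) :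
    ifsOmegaLimit f U ⊆ IFSApply f (ifsOmegaLimit f U) :=
  calc ifsOmegaLimit f U ⊆ ⋂ K, IFSApply f (ifsTail f U K) :=
        subset_iInter fun K => (iInter_subset _ (K + 1)).trans (ifsTail_succ_subset hf U K)
    _ ⊆ IFSApply f (ifsOmegaLimit f U) :=
        iInter_ifsApply_subset_ifsApply_iInter hf (ifsTail_antitone U) (isClosed_ifsTail U)

theorem ifsOmegaLimit_subset_iterate [Finite ι] [CompactSpace X] [T2Space X]
    (hf : ∀ i, Continuous (f i)) (U : Set X) (k : ℕ) :
    ifsOmegaLimit f U ⊆ (IFSApply f)^[k] (ifsOmegaLimit f U) := by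
  induction k with
  | zero => exact subset_rfl
  | succ k ih =>
    rw [Function.iterate_succ_apply']
    exact (ifsOmegaLimit_subset_ifsApply hf U).trans (ifsApply_mono f ih)

end OmegaLimit

theorem iInter_closure_iUnion_ge_eq_closure_of_tendsto_hausdorffEDist {α : Type*}
    [PseudoEMetricSpace α] {T : ℕ → Set α} {A : Set α}
    (h : Tendsto (fun k => hausdorffEDist (T k) A) atTop (𝓝 0)) :
    ⋂ K, closure (⋃ k ≥ K, T k) = closure A := by
  rw [ENNReal.tendsto_nhds_zero] at h
  apply subset_antisymm
  · intro x hx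
    refine mem_closure_iff_infEDist_zero.2 (nonpos_iff_eq_zero.1
      (le_of_forall_gt_imp_ge_of_dense fun ε hε => ?_))
    obtain ⟨N, hN⟩ := eventually_atTop.1 (h ε hε)
    have hsub : ⋃ k ≥ N, T k ⊆ {z | infEDist z A ≤ ε} :=
      iUnion₂_subset fun k hk z hz =>
        (infEDist_le_hausdorffEDist_of_mem hz).trans (hN k hk)
    exact closure_minimal hsub (isClosed_le continuous_infEDist continuous_const)
      (mem_iInter.1 hx N)
  · refine closure_minimal (fun x hx => mem_iInter.2 fun K => ?_)
      (isClosed_iInter fun _ => isClosed_closure)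
    refine mem_closure_iff_infEDist_zero.2 (nonpos_iff_eq_zero.1
      (le_of_forall_gt_imp_ge_of_dense fun ε hε => ?_))
    obtain ⟨N, hN⟩ := eventually_atTop.1 (h ε hε)
    calc infEDist x (⋃ k ≥ K, T k)
        ≤ infEDist x (T (max N K)) :=
          infEDist_anti (subset_biUnion_of_mem (u := T) (le_max_right N K))
      _ ≤ hausdorffEDist A (T (max N K)) := infEDist_le_hausdorffEDist_of_mem hx
      _ ≤ ε := hausdorffEDist_comm (s := A) ▸ hN _ (le_max_left N K)

section Conley

variable {ι X : Type*} [MetricSpace X] {f : ι → X → X}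

theorem ConleyLim.eq_ifsOmegaLimit (hf : ∀ i, Continuous (f i)) {U A : Set X}
    (hA : IsClosed A) (h : ConleyLim f U A) : A = ifsOmegaLimit f U := by
  rw [← hA.closure_eq, ← iInter_closure_iUnion_ge_eq_closure_of_tendsto_hausdorffEDist h]
  exact iInter_congr (ifsTail_closure hf U)

theorem conleyLim_ifsOmegaLimit [Finite ι] [CompactSpace X] (hf : ∀ i, Continuous (f i))
    {U : Set X} (hU : ifsOmegaLimit f U ⊆ U) : ConleyLim f U (ifsOmegaLimit f U) := by
  rw [ConleyLim, ENNReal.tendsto_nhds_zero]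
  intro ε hε
  have hnhds : ∀ x ∈ ifsOmegaLimit f U, {z | infEDist z (ifsOmegaLimit f U) < ε} ∈ 𝓝 x :=
    fun x hx => (isOpen_lt continuous_infEDist continuous_const).mem_nhds
      (by simpa [infEDist_zero_of_mem hx] using hε)
  obtain ⟨N, hN⟩ := exists_subset_nhds_of_compactSpace (ifsTail_antitone U).directed_ge
    (isClosed_ifsTail U) hnhds
  filter_upwards [eventually_ge_atTop N] with k hk
  refine hausdorffEDist_le_of_infEDist (fun z hz => (hN ?_).le) (fun y hy => ?_)
  · rw [← ifsTail_closure hf]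
    exact iterate_subset_ifsTail _ hk hz
  · have hy' : y ∈ (IFSApply f)^[k] (closure U) := ifsApply_iterate_mono f k
      (hU.trans subset_closure) (ifsOmegaLimit_subset_iterate hf U k hy)
    exact (infEDist_zero_of_mem hy').trans_le zero_le

end Conley

theorem conley_attractor_iff_omega_limit_general {ι X : Type*} [MetricSpace X] [CompactSpace X]
    [Fintype ι] (f : ι → X → X) (hf : ∀ i, Continuous (f i))
    (A : Set X) :
    IsConleyAttractor f A ↔
      ∃ U : Set X, IsOpen U ∧ A ⊆ U ∧
        A = ⋂ K ∈ {K : ℕ | 1 ≤ K},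
              closure (⋃ k ∈ {k : ℕ | K ≤ k}, (IFSApply f)^[k] U) := by
  simp only [iInter_one_le_eq_ifsOmegaLimit]
  constructor
  · rintro ⟨hA, U, hU, hAU, hlim⟩
    exact ⟨U, hU, hAU, hlim.eq_ifsOmegaLimit hf hA.isClosed⟩
  · rintro ⟨U, hU, hAU, rfl⟩
    exact ⟨(isClosed_ifsOmegaLimit U).isCompact, U, hU, hAU, conleyLim_ifsOmegaLimit hf hAU⟩

theorem conley_attractor_iff_omega_limit {ι X : Type*} [MetricSpace X] [CompactSpace X]
    [Fintype ι] [Nonempty ι] (f : ι → X → X) (hf : ∀ i, Continuous (f i))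
    (A : Set X) (hAc : IsCompact A) :
    IsConleyAttractor f A ↔
      ∃ U : Set X, IsOpen U ∧ A ⊆ U ∧
        A = ⋂ K ∈ {K : ℕ | 1 ≤ K},
              closure (⋃ k ∈ {k : ℕ | K ≤ k}, (IFSApply f)^[k] U) :=
  conley_attractor_iff_omega_limit_general f hf A
end

section
/- If Q is an attractor block with respect to an invertible IFS F on a compact metric space, then the complement X \ Q is an attractor block with respect to the inverse IFS F* = {f⁻¹ : f ∈ F}. -/
open Set Filter Metric Topology

theorem Equiv.symm_image_closure_compl_subset_interior_compl {X Y : Type*}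
    [TopologicalSpace X] [TopologicalSpace Y] (e : X ≃ Y) {S : Set X} {T : Set Y}
    (h : e '' closure S ⊆ interior T) : e.symm '' closure Tᶜ ⊆ interior Sᶜ := by
  rw [closure_compl, interior_compl, e.image_symm_eq_preimage, preimage_compl,
    compl_subset_compl, ← image_subset_iff]
  exact h

theorem IFSApply_subset_iff {ι X : Type*} (f : ι → X → X) (S T : Set X) :
    IFSApply f S ⊆ T ↔ ∀ i, f i '' S ⊆ T :=
  iUnion_subset_iff

theorem complement_attractor_block_general {ι X : Type*} [MetricSpace X] (f : ι → X ≃ₜ X)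
    (Q : Set X) (hQ : IFSApply (fun i => (f i : X → X)) (closure Q) ⊆ interior Q) :
    IFSApply (fun i => ((f i).symm : X → X)) (closure Qᶜ) ⊆ interior Qᶜ := by
  rw [IFSApply_subset_iff] at hQ ⊢
  exact fun i => (f i).toEquiv.symm_image_closure_compl_subset_interior_compl (hQ i)

theorem complement_attractor_block {ι X : Type*} [MetricSpace X] [CompactSpace X]
    [Fintype ι] [Nonempty ι] (f : ι → X ≃ₜ X)
    (Q : Set X) (hQ : IFSApply (fun i => (f i : X → X)) (closure Q) ⊆ interior Q) :
    IFSApply (fun i => ((f i).symm : X → X)) (closure Qᶜ) ⊆ interior Qᶜ :=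
  complement_attractor_block_general f Q hQ
end
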